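/- For the n-th Rudin-Shapiro polynomial P_n, the L⁴ norm satisfies M₄(P_n)⁴ = (1/2π)∫_{−π}^{π}|P_n(e^{it})|⁴ dt ∼ 4^{n+1}/3 as n → ∞; equivalently M₄(P_n)⁴ / 4^{n+1} → 1/3. -/

import Mathlib

open Polynomial

/-- Rudin-Shapiro pair (P_n, Q_n). -/
noncomputable def RS : ℕ → Polynomial ℤ × Polynomial ℤ
  | 0 => (1, 1)
  | n + 1 => ((RS n).1 + X ^ (2 ^ n) * (RS n).2, (RS n).1 - X ^ (2 ^ n) * (RS n).2)

noncomputable def RSP (n : ℕ) : Polynomial ℤ := (RS n).1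
noncomputable def RSQ (n : ℕ) : Polynomial ℤ := (RS n).2

/-- evaluation at a complex number -/
noncomputable def Pe (n : ℕ) (z : ℂ) : ℂ := Polynomial.aeval z (RSP n)
noncomputable def Qe (n : ℕ) (z : ℂ) : ℂ := Polynomial.aeval z (RSQ n)

/-
On the unit circle the parallelogram law gives `|P_n|² + |Q_n|² = 2^(n+1)`. With
`w = conj P_n · z^(2^n) Q_n` one gets `|P_(n+1)|² = 2^(n+1) + 2 Re w` and, squaring and using
`|w|² = |P_n|² (2^(n+1) - |P_n|²)`,
`|P_(n+1)|⁴ = 4^(n+1) + 2^(n+2) |P_n|² - 2 |P_n|⁴ + 2^(n+3) Re w + 2 Re w²`.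
Since `deg P_n < 2^n`, both `w` and `w²` agree on the circle with polynomials vanishing at `0`, so
they have mean zero by the mean value property. Averaging gives `M₂(P_n)² = 2^n` and
`M₄(P_(n+1))⁴ = 2 · 4^(n+1) - 2 M₄(P_n)⁴`, hence `M₄(P_n)⁴ = (4^(n+1) - (-2)^n) / 3`.
-/
open Complex Real Metric ComplexConjugate

theorem circleAverage_zero_one_eq_intervalIntegral {E : Type*} [NormedAddCommGroup E]
    [NormedSpace ℝ E] (f : ℂ → E) :
    circleAverage f 0 1 = (2 * π)⁻¹ • ∫ t in -π..π, f (exp (t * I)) := by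
  rw [circleAverage_eq_integral_add (-π), intervalIntegral.integral_comp_add_right
    (fun θ => f (circleMap 0 1 θ))]
  simp [circleMap, two_mul, ← sub_eq_add_neg]

@[fun_prop]
theorem Continuous.circleIntegrable {E : Type*} [NormedAddCommGroup E] {f : ℂ → E} {c : ℂ}
    {R : ℝ} (hf : Continuous f) : CircleIntegrable f c R :=
  hf.continuousOn.circleIntegrable'

theorem circleAverage_const_mul (a : ℝ) (f : ℂ → ℝ) (c : ℂ) (R : ℝ) :
    circleAverage (fun z => a * f z) c R = a * circleAverage f c R :=
  circleAverage_fun_smul (𝕜 := ℝ)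

theorem circleAverage_conj_aeval_mul_pow_mul_aeval_eq_zero (A B : ℤ[X]) {k : ℕ}
    (hk : A.natDegree < k) :
    circleAverage (fun z : ℂ => conj (aeval z A) * (z ^ k * aeval z B)) 0 1 = 0 := by
  set d := A.natDegree
  set G := reflect d A * X ^ (k - d) * B
  have hG : Set.EqOn (fun z : ℂ => conj (aeval z A) * (z ^ k * aeval z B))
      (fun z => aeval z G) (sphere 0 |1|) := by
    intro z hz
    have hz1 : ‖z‖ = 1 := by simpa using hz
    have hz0 : z ≠ 0 := norm_ne_zero_iff.mp (by simp [hz1])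
    have hconj : conj (aeval z A) = aeval z⁻¹ A := by
      rw [inv_eq_conj hz1]
      exact (aeval_algHom_apply (conjAe.toAlgHom.restrictScalars ℤ) z A).symm
    have hreflect : aeval z⁻¹ A = aeval z (reflect d A) * z⁻¹ ^ d := by
      let _ := invertibleOfNonzero (inv_ne_zero hz0)
      simpa [aeval_def] using (eval₂_reflect_mul_pow (algebraMap ℤ ℂ) z⁻¹ d A le_rfl).symm
    have hpow : z ^ k = z ^ d * z ^ (k - d) := by rw [← pow_add, Nat.add_sub_cancel' hk.le]
    have hcancel : z⁻¹ ^ d * z ^ d = 1 := by rw [← mul_pow, inv_mul_cancel₀ hz0, one_pow]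
    simp only [G, map_mul, map_pow, aeval_X, hconj, hreflect, hpow]
    linear_combination aeval z (reflect d A) * z ^ (k - d) * aeval z B * hcancel
  rw [circleAverage_congr_sphere hG,
    DiffContOnCl.circleAverage (G.differentiable_aeval (𝕜 := ℂ)).diffContOnCl]
  simp [G, Nat.sub_ne_zero_of_lt hk]

theorem circleAverage_re_conj_aeval_mul_pow_mul_aeval_eq_zero (A B : ℤ[X]) {k : ℕ}
    (hk : A.natDegree < k) :
    circleAverage (fun z : ℂ => (conj (aeval z A) * (z ^ k * aeval z B)).re) 0 1 = 0 := by
  have hre := reCLM.circleAverage_comp_comm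
    (f := fun z : ℂ => conj (aeval z A) * (z ^ k * aeval z B)) (c := 0) (R := 1) (by fun_prop)
  rwa [circleAverage_conj_aeval_mul_pow_mul_aeval_eq_zero A B hk, map_zero] at hre

namespace Complex

theorem norm_add_sq_eq (a b : ℂ) :
    ‖a + b‖ ^ 2 = ‖a‖ ^ 2 + ‖b‖ ^ 2 + 2 * (conj a * b).re := by
  simp only [← normSq_eq_norm_sq, normSq_apply, add_re, add_im, mul_re, conj_re, conj_im]
  ring

theorem norm_add_pow_four_eq (a b : ℂ) :
    ‖a + b‖ ^ 4 = (‖a‖ ^ 2 + ‖b‖ ^ 2) ^ 2 + 2 * ‖a‖ ^ 2 * ‖b‖ ^ 2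
      + 4 * (‖a‖ ^ 2 + ‖b‖ ^ 2) * (conj a * b).re + 2 * ((conj a * b) ^ 2).re := by
  have hnorm : ‖a‖ ^ 2 * ‖b‖ ^ 2 = (conj a * b).re ^ 2 + (conj a * b).im ^ 2 := by
    rw [← mul_pow, ← norm_conj a, ← norm_mul, Complex.sq_norm, normSq_apply]
    ring
  have hsq : ((conj a * b) ^ 2).re = (conj a * b).re ^ 2 - (conj a * b).im ^ 2 := by
    rw [pow_two, mul_re]
    ring
  rw [show ‖a + b‖ ^ 4 = (‖a + b‖ ^ 2) ^ 2 by ring, norm_add_sq_eq]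
  linear_combination -2 * hnorm - 2 * hsq

end Complex

theorem RSP_succ (n : ℕ) : RSP (n + 1) = RSP n + X ^ 2 ^ n * RSQ n := rfl

theorem RSQ_succ (n : ℕ) : RSQ (n + 1) = RSP n - X ^ 2 ^ n * RSQ n := rfl

theorem natDegree_RSP_lt_and_natDegree_RSQ_lt (n : ℕ) :
    (RSP n).natDegree < 2 ^ n ∧ (RSQ n).natDegree < 2 ^ n := by
  induction n with
  | zero => simp [RSP, RSQ, RS]
  | succ n ih =>
    have hshift : (X ^ 2 ^ n * RSQ n).natDegree < 2 ^ (n + 1) := by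
      have := natDegree_X_pow_le (R := ℤ) (2 ^ n)
      have := natDegree_mul_le (p := (X : ℤ[X]) ^ 2 ^ n) (q := RSQ n)
      rw [pow_succ]
      omega
    have hP : (RSP n).natDegree < 2 ^ (n + 1) := ih.1.trans (by rw [pow_succ]; omega)
    rw [RSP_succ, RSQ_succ]
    exact ⟨(natDegree_add_le _ _).trans_lt (max_lt hP hshift),
      (natDegree_sub_le _ _).trans_lt (max_lt hP hshift)⟩

theorem Pe_zero (z : ℂ) : Pe 0 z = 1 := by simp [Pe, RSP, RS]

theorem Pe_succ (n : ℕ) (z : ℂ) : Pe (n + 1) z = Pe n z + z ^ 2 ^ n * Qe n z := by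
  simp [Pe, Qe, RSP_succ]

theorem Qe_succ (n : ℕ) (z : ℂ) : Qe (n + 1) z = Pe n z - z ^ 2 ^ n * Qe n z := by
  simp [Pe, Qe, RSQ_succ]

@[fun_prop]
theorem continuous_Pe (n : ℕ) : Continuous (Pe n) := (RSP n).continuous_aeval

@[fun_prop]
theorem continuous_Qe (n : ℕ) : Continuous (Qe n) := (RSQ n).continuous_aeval

theorem norm_Pe_sq_add_norm_Qe_sq {z : ℂ} (hz : ‖z‖ = 1) (n : ℕ) :
    ‖Pe n z‖ ^ 2 + ‖Qe n z‖ ^ 2 = 2 ^ (n + 1) := by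
  induction n with
  | zero => norm_num [Pe, Qe, RSP, RSQ, RS]
  | succ n ih =>
    have hpar := parallelogram_law_with_norm ℝ (Pe n z) (z ^ 2 ^ n * Qe n z)
    simp only [norm_mul, norm_pow, hz, one_pow, one_mul] at hpar
    rw [Pe_succ, Qe_succ]
    linear_combination hpar + 2 * ih

theorem circleAverage_re_conj_Pe_mul_Qe_eq_zero (n : ℕ) :
    circleAverage (fun z => (conj (Pe n z) * (z ^ 2 ^ n * Qe n z)).re) 0 1 = 0 :=
  circleAverage_re_conj_aeval_mul_pow_mul_aeval_eq_zero (RSP n) (RSQ n)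
    (natDegree_RSP_lt_and_natDegree_RSQ_lt n).1

theorem circleAverage_re_sq_conj_Pe_mul_Qe_eq_zero (n : ℕ) :
    circleAverage (fun z => ((conj (Pe n z) * (z ^ 2 ^ n * Qe n z)) ^ 2).re) 0 1 = 0 := by
  have hdeg : (RSP n ^ 2).natDegree < 2 ^ (n + 1) := by
    have := natDegree_pow_le (p := RSP n) (n := 2)
    have := (natDegree_RSP_lt_and_natDegree_RSQ_lt n).1
    have := pow_succ 2 n
    omega
  have hsq : ∀ z : ℂ, (conj (Pe n z) * (z ^ 2 ^ n * Qe n z)) ^ 2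
      = conj (aeval z (RSP n ^ 2)) * (z ^ 2 ^ (n + 1) * aeval z (RSQ n ^ 2)) := by
    intro z
    simp only [Pe, Qe, map_pow]
    rw [pow_succ 2 n, pow_mul]
    ring
  simp only [hsq]
  exact circleAverage_re_conj_aeval_mul_pow_mul_aeval_eq_zero _ _ hdeg

theorem norm_Pe_succ_sq {z : ℂ} (hz : ‖z‖ = 1) (n : ℕ) :
    ‖Pe (n + 1) z‖ ^ 2 = 2 ^ (n + 1) + 2 * (conj (Pe n z) * (z ^ 2 ^ n * Qe n z)).re := by
  rw [Pe_succ, norm_add_sq_eq, ← norm_Pe_sq_add_norm_Qe_sq hz n]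
  simp [hz]

theorem norm_Pe_succ_pow_four {z : ℂ} (hz : ‖z‖ = 1) (n : ℕ) :
    ‖Pe (n + 1) z‖ ^ 4 = 4 ^ (n + 1) + 2 ^ (n + 2) * ‖Pe n z‖ ^ 2 - 2 * ‖Pe n z‖ ^ 4
      + 2 ^ (n + 3) * (conj (Pe n z) * (z ^ 2 ^ n * Qe n z)).re
      + 2 * ((conj (Pe n z) * (z ^ 2 ^ n * Qe n z)) ^ 2).re := by
  have hQ : ‖Qe n z‖ ^ 2 = 2 ^ (n + 1) - ‖Pe n z‖ ^ 2 := by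
    linear_combination norm_Pe_sq_add_norm_Qe_sq hz n
  have h4 : (4 : ℝ) ^ (n + 1) = 2 ^ (n + 1) * 2 ^ (n + 1) := by
    rw [← mul_pow]; norm_num
  rw [Pe_succ, norm_add_pow_four_eq]
  simp only [norm_mul, norm_pow, hz, one_pow, one_mul, hQ, h4]
  ring

theorem circleAverage_norm_Pe_sq (n : ℕ) :
    circleAverage (fun z => ‖Pe n z‖ ^ 2) 0 1 = 2 ^ n := by
  cases n with
  | zero => simp [Pe_zero, circleAverage_const]
  | succ n =>
    rw [circleAverage_congr_sphere (fun z hz => norm_Pe_succ_sq (by simpa using hz) n),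
      circleAverage_fun_add (by fun_prop) (by fun_prop), circleAverage_const,
      circleAverage_const_mul, circleAverage_re_conj_Pe_mul_Qe_eq_zero, mul_zero, add_zero]

theorem circleAverage_norm_Pe_pow_four_succ (n : ℕ) :
    circleAverage (fun z => ‖Pe (n + 1) z‖ ^ 4) 0 1
      = 2 * 4 ^ (n + 1) - 2 * circleAverage (fun z => ‖Pe n z‖ ^ 4) 0 1 := by
  rw [circleAverage_congr_sphere (fun z hz => norm_Pe_succ_pow_four (by simpa using hz) n),
    circleAverage_fun_add (by fun_prop) (by fun_prop),
    circleAverage_fun_add (by fun_prop) (by fun_prop),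
    circleAverage_fun_sub (by fun_prop) (by fun_prop),
    circleAverage_fun_add (by fun_prop) (by fun_prop),
    circleAverage_const, circleAverage_const_mul, circleAverage_const_mul, circleAverage_const_mul,
    circleAverage_const_mul, circleAverage_norm_Pe_sq, circleAverage_re_conj_Pe_mul_Qe_eq_zero,
    circleAverage_re_sq_conj_Pe_mul_Qe_eq_zero]
  have h4 : (4 : ℝ) ^ n = 2 ^ n * 2 ^ n := by rw [← mul_pow]; norm_num
  linear_combination -4 * h4

theorem circleAverage_norm_Pe_pow_four (n : ℕ) :
    circleAverage (fun z => ‖Pe n z‖ ^ 4) 0 1 = (4 ^ (n + 1) - (-2) ^ n) / 3 := by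
  induction n with
  | zero => norm_num [Pe_zero, circleAverage_const]
  | succ n ih =>
    rw [circleAverage_norm_Pe_pow_four_succ, ih]
    ring

open Filter in
theorem littlewood_fourth_moment :
    Tendsto (fun n : ℕ =>
        ((1 / (2 * Real.pi)) *
          ∫ t in (-Real.pi)..Real.pi,
            ‖Pe n (Complex.exp (t * Complex.I))‖ ^ 4) / 4 ^ (n + 1))
      atTop (nhds (1 / 3)) := by
  have hmoment (n : ℕ) : (1 / (2 * π)) * ∫ t in -π..π, ‖Pe n (exp (t * I))‖ ^ 4
      = (4 ^ (n + 1) - (-2) ^ n) / 3 := by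
    rw [← circleAverage_norm_Pe_pow_four, circleAverage_zero_one_eq_intervalIntegral, smul_eq_mul,
      one_div]
  have hratio (n : ℕ) :
      (4 ^ (n + 1) - (-2) ^ n) / 3 / 4 ^ (n + 1) = 1 / 3 - (-1 / 2 : ℝ) ^ n / 12 := by
    rw [show (-2 : ℝ) ^ n = (-1 / 2) ^ n * 4 ^ n by rw [← mul_pow]; norm_num, pow_succ]
    field_simp
    ring
  simp only [hmoment, hratio]
  have hgeom : Tendsto (fun n : ℕ => (-1 / 2 : ℝ) ^ n) atTop (nhds 0) :=
    tendsto_pow_atTop_nhds_zero_of_abs_lt_one (by norm_num)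
  simpa using tendsto_const_nhds.sub (hgeom.div_const 12)
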